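/- Let z_1, …, z_M be complex numbers with Re(z_m) ≤ 0 for every m ∈ {1,…,M}. Then |∏_{m=1}^M 1/(1 − z_m) − ∏_{m=1}^M e^{z_m}| ≤ ∑_{m=1}^M min{2, |z_m|² e^{−Re(z_m)}}. -/

import Mathlib

/-!
Both `(1 - z)⁻¹` and `exp z` lie in the closed unit disc when `Re z ≤ 0`, so the difference of the
products telescopes into the sum of the differences of the factors. Each of these is at most `2`,
and `(1 - z)⁻¹ - exp z = (1 - z)⁻¹ (1 - (1 - z) exp z)`, where `1 - (1 - z) exp z` is the increment
of `t ↦ (t z - 1) exp (t z)` over `[0, 1]`; its derivative `t z² exp (t z)` has norm at most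
`t ‖z‖²`, giving the bound `‖z‖² / 2 ≤ ‖z‖² exp (-Re z)`.
-/

open Set

theorem Finset.norm_prod_sub_prod_le_sum_norm_sub {ι R : Type*} [NormedCommRing R]
    [NormOneClass R] (s : Finset ι) {a b : ι → R} (ha : ∀ i ∈ s, ‖a i‖ ≤ 1)
    (hb : ∀ i ∈ s, ‖b i‖ ≤ 1) :
    ‖∏ i ∈ s, a i - ∏ i ∈ s, b i‖ ≤ ∑ i ∈ s, ‖a i - b i‖ := by
  induction s using Finset.cons_induction with
  | empty => simp
  | cons i s _ ih =>
    simp only [Finset.forall_mem_cons] at ha hb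
    have ih := ih ha.2 hb.2
    have hB : ‖∏ j ∈ s, b j‖ ≤ 1 :=
      (Finset.norm_prod_le s b).trans (Finset.prod_le_one (fun _ _ ↦ norm_nonneg _) hb.2)
    rw [Finset.prod_cons, Finset.prod_cons, Finset.sum_cons,
      show a i * ∏ j ∈ s, a j - b i * ∏ j ∈ s, b j
        = (a i - b i) * ∏ j ∈ s, b j + a i * (∏ j ∈ s, a j - ∏ j ∈ s, b j) by ring]
    calc _ ≤ ‖a i - b i‖ * ‖∏ j ∈ s, b j‖ + ‖a i‖ * ‖∏ j ∈ s, a j - ∏ j ∈ s, b j‖ :=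
          (norm_add_le _ _).trans (add_le_add (norm_mul_le _ _) (norm_mul_le _ _))
      _ ≤ ‖a i - b i‖ * 1 + 1 * ∑ j ∈ s, ‖a j - b j‖ := by gcongr; exact ha.1
      _ = _ := by ring

namespace Complex

theorem one_le_norm_one_sub {z : ℂ} (hz : z.re ≤ 0) : 1 ≤ ‖1 - z‖ :=
  calc (1 : ℝ) ≤ (1 - z).re := by simp only [sub_re, one_re]; linarith
    _ ≤ ‖1 - z‖ := re_le_norm _

theorem norm_inv_one_sub_le_one {z : ℂ} (hz : z.re ≤ 0) : ‖(1 - z)⁻¹‖ ≤ 1 := by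
  rw [norm_inv]
  exact inv_le_one_of_one_le₀ (one_le_norm_one_sub hz)

theorem norm_exp_le_one_of_re_nonpos {z : ℂ} (hz : z.re ≤ 0) : ‖exp z‖ ≤ 1 := by
  rw [norm_exp]
  exact Real.exp_le_one_iff.mpr hz

theorem norm_one_sub_mul_exp_le {z : ℂ} (hz : z.re ≤ 0) :
    ‖1 - (1 - z) * exp z‖ ≤ ‖z‖ ^ 2 / 2 := by
  set f : ℝ → ℂ := fun t ↦ (t * z - 1) * exp (t * z) + 1
  have hf : ∀ t : ℝ, HasDerivAt f (t * z ^ 2 * exp (t * z)) t := by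
    intro t
    have hlin : HasDerivAt (fun t : ℝ ↦ (t : ℂ) * z) z t := by
      simpa using (ofRealCLM.hasDerivAt (x := t)).mul_const z
    exact (((hlin.sub_const 1).mul hlin.cexp).add_const 1).congr_deriv (by ring)
  have hB : ∀ t : ℝ, HasDerivAt (fun t ↦ ‖z‖ ^ 2 / 2 * t ^ 2) (t * ‖z‖ ^ 2) t := by
    intro t
    exact ((hasDerivAt_pow 2 t).const_mul (‖z‖ ^ 2 / 2)).congr_deriv (by norm_num; ring)
  have hbound : ∀ t ∈ Ico (0 : ℝ) 1, ‖(t : ℂ) * z ^ 2 * exp (t * z)‖ ≤ t * ‖z‖ ^ 2 := by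
    rintro t ⟨ht0, -⟩
    have hexp : ‖exp (t * z)‖ ≤ 1 :=
      norm_exp_le_one_of_re_nonpos (by simpa using mul_nonpos_of_nonneg_of_nonpos ht0 hz)
    rw [norm_mul, norm_mul, norm_pow, norm_real, Real.norm_of_nonneg ht0]
    exact mul_le_of_le_one_right (by positivity) hexp
  have key := image_norm_le_of_norm_deriv_right_le_deriv_boundary
    (fun t _ ↦ (hf t).continuousAt.continuousWithinAt) (fun t _ ↦ (hf t).hasDerivWithinAt)
    (by simp [f]) hB hbound (right_mem_Icc.mpr zero_le_one)
  have hf1 : f 1 = 1 - (1 - z) * exp z := by simp only [f, ofReal_one, one_mul]; ring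
  rwa [hf1, one_pow, mul_one] at key

theorem norm_inv_one_sub_sub_exp_le {z : ℂ} (hz : z.re ≤ 0) :
    ‖(1 - z)⁻¹ - exp z‖ ≤ min 2 (‖z‖ ^ 2 * Real.exp (-z.re)) := by
  have hinv := norm_inv_one_sub_le_one hz
  have hexp := norm_exp_le_one_of_re_nonpos hz
  refine le_min (by linarith [norm_sub_le (1 - z)⁻¹ (exp z)]) ?_
  have hne : 1 - z ≠ 0 := norm_pos_iff.mp (one_pos.trans_le (one_le_norm_one_sub hz))
  have hfactor : (1 - z)⁻¹ - exp z = (1 - z)⁻¹ * (1 - (1 - z) * exp z) := by field_simp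
  have hone : 1 ≤ Real.exp (-z.re) := Real.one_le_exp (neg_nonneg.mpr hz)
  calc ‖(1 - z)⁻¹ - exp z‖ ≤ 1 * (‖z‖ ^ 2 / 2) := by
        rw [hfactor, norm_mul]
        gcongr
        exact norm_one_sub_mul_exp_le hz
    _ ≤ ‖z‖ ^ 2 * Real.exp (-z.re) := by nlinarith [sq_nonneg ‖z‖]

end Complex

/-- Combination of Lemmas 3 and 4 of the paper: for `z_1, …, z_M` with `Re (z_m) ≤ 0`,
`|∏ 1/(1 - z_m) - ∏ exp z_m| ≤ ∑ min {2, |z_m|² e^{-Re z_m}}`. -/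
theorem product_inv_sub_product_exp_bound_sq (M : ℕ) (z : Fin M → ℂ)
    (hz : ∀ m, (z m).re ≤ 0) :
    ‖∏ m, (1 - z m)⁻¹ - ∏ m, Complex.exp (z m)‖ ≤
      ∑ m, min 2 (‖z m‖ ^ 2 * Real.exp (-(z m).re)) :=
  (Finset.univ.norm_prod_sub_prod_le_sum_norm_sub
      (fun m _ ↦ Complex.norm_inv_one_sub_le_one (hz m))
      (fun m _ ↦ Complex.norm_exp_le_one_of_re_nonpos (hz m))).trans
    (Finset.sum_le_sum fun m _ ↦ Complex.norm_inv_one_sub_sub_exp_le (hz m))
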